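/- arXiv:1607.02482 — 3 statements merged into one kernel-verified Lean document; each statement's English description precedes it below -/
import Mathlib

section
/- Let (R, m) be a finite local ring and π(x) any π-polynomial. If the ideal Z(R) of polynomials vanishing on R is principal, then Z(R) = (π(x)). -/
/-!
Distinct residues make the factors `X - cᵢ` pairwise comaximal, so `π` divides every polynomial
vanishing on `R`, and a generator of `Z(R)` has the form `π * w`; it remains to see that `w` is a
unit. For `a ≠ 0` in the socle (`a * m = 0`), `a * π ∈ Z(R)` because `π` takes values in `m`, so
`μ * w = a` for some `μ`. The reduction of `w` is nonzero, since `Z(R)` contains the monic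
`∏_{r ∈ R} (X - r)`; hence `w` is not a zero divisor, the coefficients of `μ` are killed by `m` as
well, and the coefficient of `μ * w` in degree `deg μ + deg w̄` is `lc μ` times a unit. This forces
`deg w̄ = 0`, and over a zero-dimensional local ring a polynomial whose reduction is a nonzero
constant is a unit.
-/

open Polynomial IsLocalRing

/-- The ideal of polynomials in `R[X]` mapping every element of `S` into the ideal `I`. -/
def zeroFunctionsInto {R : Type*} [CommRing R] (S : Set R) (I : Ideal R) : Ideal R[X] where
  carrier := {f | ∀ s ∈ S, f.eval s ∈ I}
  add_mem' := fun hf hg s hs => by simpa using I.add_mem (hf s hs) (hg s hs)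
  zero_mem' := fun s _ => by simp
  smul_mem' := fun c f hf s hs => by simpa using I.mul_mem_left (c.eval s) (hf s hs)

/-- The ideal of polynomials vanishing on the subset `S`. -/
def zeroFunctions {R : Type*} [CommRing R] (S : Set R) : Ideal R[X] :=
  zeroFunctionsInto S ⊥

theorem mem_zeroFunctions_univ {R : Type*} [CommRing R] {f : R[X]} :
    f ∈ zeroFunctions (Set.univ : Set R) ↔ ∀ r : R, f.eval r = 0 := by
  simp [zeroFunctions, zeroFunctionsInto]

namespace Polynomial

theorem prod_X_sub_C_dvd_of_isUnit_sub {R ι : Type*} [CommRing R] {s : Finset ι} {c : ι → R}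
    (hc : (s : Set ι).Pairwise fun i j => IsUnit (c i - c j)) {f : R[X]}
    (hf : ∀ i ∈ s, f.eval (c i) = 0) : ∏ i ∈ s, (X - C (c i)) ∣ f :=
  Finset.prod_dvd_of_coprime (hc.mono' fun _ _ => isCoprime_X_sub_C_of_isUnit_sub)
    fun i hi => dvd_iff_isRoot.mpr (hf i hi)

theorem mem_nonZeroDivisors_of_isUnit_coeff {R : Type*} [CommRing R] {p : R[X]} {n : ℕ}
    (hn : IsUnit (p.coeff n)) : p ∈ nonZeroDivisors R[X] := by
  by_contra hp
  obtain ⟨a, ha, hap⟩ := notMem_nonZeroDivisors_iff.mp hp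
  apply ha
  simpa [hn.mul_left_eq_zero] using congrArg (coeff · n) hap

theorem coeff_mul_natDegree_add {R : Type*} [Semiring R] {p q : R[X]} {d : ℕ}
    (h : ∀ i j, d < j → p.coeff i * q.coeff j = 0) :
    (p * q).coeff (p.natDegree + d) = p.leadingCoeff * q.coeff d := by
  rw [coeff_mul, Finset.sum_eq_single (p.natDegree, d)]
  · rfl
  · rintro ⟨i, j⟩ hij hne
    rw [Finset.HasAntidiagonal.mem_antidiagonal] at hij
    rcases lt_or_ge d j with hj | hj
    · exact h i j hj
    · rw [coeff_eq_zero_of_natDegree_lt (by grind), zero_mul]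
  · simp

end Polynomial

namespace IsLocalRing

variable {R : Type*} [CommRing R] [IsLocalRing R]

theorem exists_ne_zero_forall_mem_maximalIdeal_mul_eq_zero [IsNoetherianRing R]
    [Ring.KrullDimLE 0 R] : ∃ a : R, a ≠ 0 ∧ ∀ ε ∈ maximalIdeal R, ε * a = 0 := by
  obtain ⟨P, hP⟩ := associatedPrimes.nonempty R R
  obtain ⟨hPrime, a, rfl⟩ := isAssociatedPrime_iff.mp hP
  rw [← Ring.KrullDimLE.eq_maximalIdeal_of_isPrime (Submodule.colon ⊥ {a})]
  refine ⟨a, fun ha => hPrime.ne_top (by simp [ha]), fun ε hε => ?_⟩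
  simpa using Submodule.mem_colon_singleton.mp hε

theorem prod_X_sub_C_dvd_of_mem_zeroFunctions {ι : Type*} [Fintype ι] {c : ι → R}
    (hc : Function.Injective fun i => residue R (c i)) {f : R[X]}
    (hf : f ∈ zeroFunctions (Set.univ : Set R)) : ∏ i, (X - C (c i)) ∣ f := by
  refine prod_X_sub_C_dvd_of_isUnit_sub (fun i _ j _ hij => ?_) fun i _ =>
    mem_zeroFunctions_univ.mp hf (c i)
  dsimp only
  rw [← residue_ne_zero_iff_isUnit, map_sub, sub_ne_zero]
  exact hc.ne hij

theorem eval_prod_X_sub_C_mem_maximalIdeal {ι : Type*} [Fintype ι] {c : ι → R}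
    (hc : Function.Surjective fun i => residue R (c i)) (r : R) :
    (∏ i, (X - C (c i))).eval r ∈ maximalIdeal R := by
  obtain ⟨i, hi⟩ := hc (residue R r)
  rw [← residue_eq_zero_iff, eval_prod, map_prod]
  exact Finset.prod_eq_zero (Finset.mem_univ i) (by simp [hi])

theorem map_residue_ne_zero_of_span_eq [Fintype R] {g : R[X]}
    (hg : zeroFunctions (Set.univ : Set R) = Ideal.span {g}) : g.map (residue R) ≠ 0 := by
  have hmem : ∏ r : R, (X - C r) ∈ zeroFunctions (Set.univ : Set R) :=
    mem_zeroFunctions_univ.mpr fun r => by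
      simp [eval_prod, Finset.prod_eq_zero (Finset.mem_univ r)]
  rw [hg, Ideal.mem_span_singleton] at hmem
  refine ne_zero_of_dvd_ne_zero ?_ (map_dvd (residue R) hmem)
  exact ((monic_prod_of_monic _ _ fun r _ => monic_X_sub_C r).map _).ne_zero

theorem natDegree_map_residue_eq_zero_of_mul_eq_C {w μ : R[X]} {a : R} (ha : a ≠ 0)
    (hma : ∀ ε ∈ maximalIdeal R, ε * a = 0) (hw : w.map (residue R) ≠ 0) (h : μ * w = C a) :
    (w.map (residue R)).natDegree = 0 := by
  set d := (w.map (residue R)).natDegree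
  have hwd : IsUnit (w.coeff d) := by
    rw [← residue_ne_zero_iff_isUnit, ← coeff_map]
    exact leadingCoeff_ne_zero.mpr hw
  have hwm : ∀ j, d < j → w.coeff j ∈ maximalIdeal R := fun j hj => by
    rw [← residue_eq_zero_iff, ← coeff_map]
    exact coeff_eq_zero_of_natDegree_lt hj
  have hμ : ∀ ε ∈ maximalIdeal R, ∀ i, ε * μ.coeff i = 0 := fun ε hε i => by
    have : C ε * μ * w = 0 := by rw [mul_assoc, h, ← C_mul, hma ε hε, C_0]
    rw [mul_right_mem_nonZeroDivisors_eq_zero_iff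
      (mem_nonZeroDivisors_of_isUnit_coeff hwd)] at this
    simpa using congrArg (coeff · i) this
  have hcoeff := coeff_mul_natDegree_add (p := μ) (q := w) (d := d) fun i j hj =>
    (mul_comm _ _).trans (hμ _ (hwm j hj) i)
  by_contra hd
  rw [h, coeff_C, if_neg (by omega), eq_comm, hwd.mul_left_eq_zero, leadingCoeff_eq_zero] at hcoeff
  rw [hcoeff, zero_mul, eq_comm, C_eq_zero] at h
  exact ha h

theorem isUnit_of_natDegree_map_residue_eq_zero [Ring.KrullDimLE 0 R] {w : R[X]}
    (hw : w.map (residue R) ≠ 0) (hd : (w.map (residue R)).natDegree = 0) : IsUnit w := by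
  refine isUnit_iff_coeff_isUnit_isNilpotent.mpr ⟨?_, fun i hi => ?_⟩
  · rw [← residue_ne_zero_iff_isUnit, ← coeff_map, ← hd]
    exact leadingCoeff_ne_zero.mpr hw
  · rw [Ring.KrullDimLE.isNilpotent_iff_mem_maximalIdeal, ← residue_eq_zero_iff, ← coeff_map]
    exact coeff_eq_zero_of_natDegree_lt (by omega)

end IsLocalRing

theorem statement_7 {R : Type*} [CommRing R] [Finite R] [IsLocalRing R]
    (q : ℕ) (c : Fin q → R) (hc : Function.Bijective (fun i => residue R (c i)))
    (h : (zeroFunctions (Set.univ : Set R)).IsPrincipal) :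
    zeroFunctions (Set.univ : Set R) = Ideal.span {∏ i, (X - C (c i))} := by
  have := Fintype.ofFinite R
  set π := ∏ i, (X - C (c i))
  have hπ : π.Monic := monic_prod_of_monic _ _ fun i _ => monic_X_sub_C (c i)
  obtain ⟨g, hg⟩ := h.principal
  rw [Ideal.submodule_span_eq] at hg
  obtain ⟨w, rfl⟩ : π ∣ g :=
    prod_X_sub_C_dvd_of_mem_zeroFunctions hc.1 (hg ▸ Ideal.mem_span_singleton_self g)
  obtain ⟨a, ha, hma⟩ := exists_ne_zero_forall_mem_maximalIdeal_mul_eq_zero (R := R)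
  have haπ : C a * π ∈ zeroFunctions (Set.univ : Set R) :=
    mem_zeroFunctions_univ.mpr fun r => by
      rw [eval_mul, eval_C, mul_comm]
      exact hma _ (eval_prod_X_sub_C_mem_maximalIdeal hc.2 r)
  obtain ⟨μ, hμ⟩ := Ideal.mem_span_singleton.mp (hg ▸ haπ)
  have hμw : μ * w = C a := by
    rw [← sub_eq_zero, ← hπ.mul_right_eq_zero_iff]
    linear_combination -hμ
  have hw : w.map (residue R) ≠ 0 := by
    have hπw := map_residue_ne_zero_of_span_eq hg
    rw [Polynomial.map_mul] at hπw
    exact right_ne_zero_of_mul hπw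
  have hwu : IsUnit w := isUnit_of_natDegree_map_residue_eq_zero hw
    (natDegree_map_residue_eq_zero_of_mul_eq_C ha hma hw hμw)
  rw [hg, Ideal.span_singleton_mul_right_unit hwu]
end

section
/- Let (R, m) be a Noetherian local ring. The ideal Z(m) of polynomials vanishing on m contains a nonzero polynomial if and only if depth R = 0 (equivalently, every element of m is a zero divisor). -/
open Polynomial IsLocalRing

/-!
If `a ∈ 𝔪` is a nonzerodivisor, the powers `a, a², a³, …` lie in `𝔪` and their pairwise
differences `aⁱ (1 - aʲ⁻ⁱ)` are nonzerodivisors; a polynomial with infinitely many such roots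
is zero, since each root splits off a linear factor that can be cancelled at the other roots.
Conversely, if `𝔪` consists of zero divisors, prime avoidance over the finitely many associated
primes makes `𝔪` an associated prime, so `d 𝔪 = 0` for some `d ≠ 0`, and `d X` vanishes on `𝔪`.
-/

open scoped nonZeroDivisors

theorem mem_zeroFunctions {R : Type*} [CommRing R] {S : Set R} {f : R[X]} :
    f ∈ zeroFunctions S ↔ ∀ s ∈ S, f.eval s = 0 :=
  forall₂_congr fun _ _ => Ideal.mem_bot

theorem Polynomial.eq_zero_of_forall_eval_eq_zero_of_pairwise_sub_mem_nonZeroDivisors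
    {R : Type*} [CommRing R] {v : ℕ → R} (hv : Pairwise fun i j => v i - v j ∈ R⁰)
    {p : R[X]} (hp : ∀ i, p.eval (v i) = 0) : p = 0 := by
  induction hn : p.natDegree using Nat.strong_induction_on generalizing p v with
  | _ n ih =>
  by_contra hp0
  obtain ⟨q, rfl⟩ : X - C (v 0) ∣ p := dvd_iff_isRoot.mpr (hp 0)
  have hq0 : q ≠ 0 := by rintro rfl; simp at hp0
  have : Nontrivial R := nontrivial_iff.mp (nontrivial_of_ne q 0 hq0)
  have hq : ∀ i, q.eval (v (i + 1)) = 0 := fun i => by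
    have := hp (i + 1)
    rwa [eval_mul, eval_sub, eval_X, eval_C,
      mul_left_mem_nonZeroDivisors_eq_zero_iff (hv i.succ_ne_zero)] at this
  refine hq0 (ih q.natDegree ?_ (fun i j hij => hv (by simpa using hij)) hq rfl)
  rw [← hn, (monic_X_sub_C _).natDegree_mul' hq0, natDegree_X_sub_C]
  omega

theorem IsLocalRing.pow_sub_pow_mem_nonZeroDivisors {R : Type*} [CommRing R] [IsLocalRing R]
    {a : R} (ha : a ∈ maximalIdeal R) (hreg : a ∈ R⁰) {i j : ℕ} (hij : i ≠ j) :
    a ^ i - a ^ j ∈ R⁰ := by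
  wlog hlt : i < j generalizing i j
  · rw [← neg_sub, neg_eq_neg_one_mul]
    exact mul_mem isUnit_one.neg.mem_nonZeroDivisors (this hij.symm (by omega))
  have hunit : IsUnit (1 - a ^ (j - i)) :=
    isUnit_one_sub_self_of_mem_nonunits _ (Ideal.pow_mem_of_mem _ ha _ (by omega))
  rw [show a ^ i - a ^ j = a ^ i * (1 - a ^ (j - i)) by
    rw [mul_sub, mul_one, ← pow_add, Nat.add_sub_cancel' hlt.le]]
  exact mul_mem (pow_mem hreg i) hunit.mem_nonZeroDivisors

theorem statement_10 {R : Type*} [CommRing R] [IsNoetherianRing R] [IsLocalRing R] :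
    (∃ f : R[X], f ≠ 0 ∧ f ∈ zeroFunctions (maximalIdeal R : Set R)) ↔
      ∀ a ∈ maximalIdeal R, a ∉ nonZeroDivisors R := by
  simp only [mem_zeroFunctions]
  constructor
  · rintro ⟨f, hf0, hf⟩ a ha hreg
    have hroots : ∀ k : ℕ, f.eval (a ^ (k + 1)) = 0 :=
      fun k => hf _ (Ideal.pow_mem_of_mem _ ha _ k.succ_pos)
    exact hf0 (eq_zero_of_forall_eval_eq_zero_of_pairwise_sub_mem_nonZeroDivisors
      (fun i j hij => pow_sub_pow_mem_nonZeroDivisors ha hreg (by simpa using hij)) hroots)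
  · intro h
    obtain ⟨d, hd, hd0⟩ := SetLike.exists_of_lt
      (Ideal.bot_lt_annihilator_of_disjoint_nonZeroDivisors (Set.disjoint_left.mpr h))
    refine ⟨C d * X, fun hf => hd0 ?_, fun s hs => ?_⟩
    · simpa using congr(coeff $hf 1)
    · rw [eval_mul, eval_C, eval_X]
      exact congr(Subtype.val $(Module.mem_annihilator.mp hd ⟨s, hs⟩))
end

section
/- Let (R, m) be a Noetherian local ring. The ideal Z(m) of polynomials vanishing on m contains a regular polynomial (a non-zero-divisor in R[x]) if and only if dim R = 0, i.e., R is Artinian. -/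
open Polynomial IsLocalRing

/-!
A regular polynomial has a coefficient outside every associated prime of `R` (McCoy), in
particular outside every minimal prime `q`. On the other hand, if `q` is a prime that is not
maximal, then `R ⧸ q` is an infinite domain, so the image of any ideal not contained in `q`
is infinite; a polynomial vanishing on `m` therefore vanishes identically modulo every such
`q` with `m ⊄ q`. Hence a regular polynomial vanishing on `m` forces every minimal prime to
be `m`, i.e. `dim R = 0`. Conversely, in an Artinian local ring `m ^ n = 0`, so the monic
polynomial `X ^ n` vanishes on `m`.
-/

section General

variable {R : Type*} [CommRing R]

theorem Ideal.exists_ne_zero_forall_mul_eq_zero_of_mem_minimalPrimes [IsNoetherianRing R]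
    {q : Ideal R} (hq : q ∈ minimalPrimes R) : ∃ x : R, x ≠ 0 ∧ ∀ r ∈ q, r * x = 0 := by
  have hann : q ∈ (Module.annihilator R R).minimalPrimes := by
    rwa [Module.annihilator_eq_bot.mpr inferInstance]
  obtain ⟨hprime, x, rfl⟩ :=
    isAssociatedPrime_iff.mp
      (Module.associatedPrimes.minimalPrimes_annihilator_subset_associatedPrimes R R hann)
  refine ⟨x, fun hx => hprime.ne_top ?_, fun r hr => ?_⟩
  · simp [hx]
  · simpa using Submodule.mem_colon_singleton.mp hr

theorem Polynomial.exists_coeff_notMem_of_mem_nonZeroDivisors [IsNoetherianRing R]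
    {f : R[X]} (hf : f ∈ nonZeroDivisors R[X]) {q : Ideal R} (hq : q ∈ minimalPrimes R) :
    ∃ i, f.coeff i ∉ q := by
  by_contra! hcoeff
  obtain ⟨x, hx0, hx⟩ := Ideal.exists_ne_zero_forall_mul_eq_zero_of_mem_minimalPrimes hq
  refine hx0 (Polynomial.mem_nonZeroDivisors_iff.mp hf x ?_)
  ext i
  simp [mul_comm x, hx _ (hcoeff i)]

theorem Polynomial.coeff_mem_of_mem_zeroFunctionsInto {p : Ideal R} [p.IsPrime]
    (hp : ¬ p.IsMaximal) {I : Ideal R} (hI : ¬ I ≤ p) {f : R[X]}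
    (hf : f ∈ zeroFunctionsInto (I : Set R) p) (i : ℕ) : f.coeff i ∈ p := by
  obtain ⟨a, haI, hap⟩ := SetLike.not_le_iff_exists.mp hI
  have : Infinite (R ⧸ p) := by
    refine not_finite_iff_infinite.mp fun _ => hp ?_
    exact Ideal.Quotient.maximal_of_isField p (Finite.isField_of_domain _)
  have ha : Ideal.Quotient.mk p a ≠ 0 := by rwa [Ne, Ideal.Quotient.eq_zero_iff_mem]
  have hmap : f.map (Ideal.Quotient.mk p) = 0 := by
    refine eq_zero_of_infinite_isRoot _ (Set.infinite_of_injective_forall_mem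
      (mul_right_injective₀ ha) fun d => ?_)
    obtain ⟨r, rfl⟩ := Ideal.Quotient.mk_surjective d
    rw [Set.mem_ofPred_eq, IsRoot, ← map_mul, eval_map, eval₂_hom,
      Ideal.Quotient.eq_zero_iff_mem]
    exact hf _ (I.mul_mem_right r haI)
  rw [← Ideal.Quotient.eq_zero_iff_mem, ← coeff_map, hmap, coeff_zero]

theorem X_pow_mem_zeroFunctions {I : Ideal R} {n : ℕ} (h : I ^ n = ⊥) :
    X ^ n ∈ zeroFunctions (I : Set R) := fun z hz => by
  simpa [← h] using Ideal.pow_mem_pow hz n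

end General

theorem IsLocalRing.krullDimLE_zero_of_mem_zeroFunctions_of_mem_nonZeroDivisors
    {R : Type*} [CommRing R] [IsNoetherianRing R] [IsLocalRing R] {f : R[X]}
    (hf : f ∈ zeroFunctions (maximalIdeal R : Set R)) (hreg : f ∈ nonZeroDivisors R[X]) :
    Ring.KrullDimLE 0 R := by
  refine Ring.krullDimLE_zero_iff_forall_minimalPrimes_isMaximal.mpr fun q hq => ?_
  have hqprime : q.IsPrime := hq.1.1
  by_contra hmax
  have hm : ¬ maximalIdeal R ≤ q := fun hle =>
    hmax (le_antisymm (le_maximalIdeal hqprime.ne_top) hle ▸ maximalIdeal.isMaximal R)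
  have hf' : f ∈ zeroFunctionsInto (maximalIdeal R : Set R) q := fun s hs =>
    (bot_le : (⊥ : Ideal R) ≤ q) (hf s hs)
  obtain ⟨i, hi⟩ := exists_coeff_notMem_of_mem_nonZeroDivisors hreg hq
  exact hi (coeff_mem_of_mem_zeroFunctionsInto hmax hm hf' i)

theorem statement_12 {R : Type*} [CommRing R] [IsNoetherianRing R] [IsLocalRing R] :
    (∃ f ∈ zeroFunctions (maximalIdeal R : Set R), f ∈ nonZeroDivisors R[X]) ↔
      IsArtinianRing R := by
  constructor
  · rintro ⟨f, hf, hreg⟩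
    have := krullDimLE_zero_of_mem_zeroFunctions_of_mem_nonZeroDivisors hf hreg
    exact IsNoetherianRing.isArtinianRing_of_krullDimLE_zero
  · intro h
    obtain ⟨n, hn⟩ := (isArtinianRing_iff_isNilpotent_maximalIdeal R).mp h
    exact ⟨X ^ n, X_pow_mem_zeroFunctions hn, (monic_X_pow n).mem_nonZeroDivisors⟩
end
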